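/- Fix t ∈ ℝ and define the operator Γ on smooth functions v : ℝ → ℂ by (Γv)(x) = x·v(x) + 2it·v'(x). Then for every smooth u : ℝ → ℂ and every integer j ≥ 0, the j-fold iterate satisfies the Leibniz-type identity Γ^j( u·u·conj(u) ) = Σ_{k₁+k₂+k₃=j} ( j! · (−1)^{k₃} / (k₁! · k₂! · k₃!) ) · (Γ^{k₁}u) · (Γ^{k₂}u) · conj(Γ^{k₃}u), where the sum runs over all triples of nonnegative integers (k₁,k₂,k₃) with k₁+k₂+k₃ = j. -/

import Mathlib

/-- The vector field `Γ = x + 2it∂_x` (for fixed time `t`), acting on functions `ℝ → ℂ`. -/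
noncomputable def Gam (t : ℝ) (v : ℝ → ℂ) : ℝ → ℂ :=
  fun x => (x : ℂ) * v x + 2 * Complex.I * (t : ℂ) * deriv v x

namespace Stmt17Aux

open Complex Finset
set_option maxHeartbeats 1000000

noncomputable def Dc (a b c : ℕ) : ℂ :=
  ((a+b+c).factorial : ℂ) * (-1)^c / ((a.factorial : ℂ) * (b.factorial : ℂ) * (c.factorial : ℂ))

noncomputable def Cc (j k₁ k₂ : ℕ) : ℂ :=
  if k₁ + k₂ ≤ j then Dc k₁ k₂ (j - k₁ - k₂) else 0

lemma factC_ne (n : ℕ) : (n.factorial : ℂ) ≠ 0 := by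
  exact_mod_cast n.factorial_pos.ne'

lemma castsucc_ne (n : ℕ) : ((n:ℂ)+1) ≠ 0 := by
  exact_mod_cast n.succ_ne_zero

lemma DA (a b c : ℕ) : Dc (a+1) b c = ((a:ℂ)+(b:ℂ)+(c:ℂ)+1)/((a:ℂ)+1) * Dc a b c := by
  have h1 : a+1+b+c = (a+b+c)+1 := by omega
  simp only [Dc, h1, Nat.factorial_succ]
  push_cast
  field_simp [factC_ne, castsucc_ne]

lemma DB (a b c : ℕ) : Dc a (b+1) c = ((a:ℂ)+(b:ℂ)+(c:ℂ)+1)/((b:ℂ)+1) * Dc a b c := by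
  have h1 : a+(b+1)+c = (a+b+c)+1 := by omega
  simp only [Dc, h1, Nat.factorial_succ]
  push_cast
  field_simp [factC_ne, castsucc_ne]

lemma DCc (a b c : ℕ) : Dc a b (c+1) = -(((a:ℂ)+(b:ℂ)+(c:ℂ)+1)/((c:ℂ)+1)) * Dc a b c := by
  have h1 : a+b+(c+1) = (a+b+c)+1 := by omega
  simp only [Dc, h1, Nat.factorial_succ, pow_succ]
  push_cast
  field_simp [factC_ne, castsucc_ne]

lemma Dpascal (a b c : ℕ) (h : 1 ≤ a + b + c) :
    Dc a b c = (if a = 0 then 0 else Dc (a-1) b c) + (if b = 0 then 0 else Dc a (b-1) c)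
      - (if c = 0 then 0 else Dc a b (c-1)) := by
  rcases a with _|a <;> rcases b with _|b <;> rcases c with _|c <;>
    simp only [if_true, if_false, Nat.succ_ne_zero, Nat.add_sub_cancel, reduceIte,
      Nat.succ_sub_one, DA, DB, DCc] <;>
  first
    | omega
    | (push_cast; field_simp [castsucc_ne]; try ring)

lemma Czero {j k₁ k₂ : ℕ} (h : j < k₁ + k₂) : Cc j k₁ k₂ = 0 := if_neg (by omega)

lemma Crec (j k₁ k₂ : ℕ) :
    Cc (j+1) k₁ k₂ = (if k₁ = 0 then 0 else Cc j (k₁-1) k₂)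
      + (if k₂ = 0 then 0 else Cc j k₁ (k₂-1)) - Cc j k₁ k₂ := by
  rcases le_or_gt (k₁ + k₂) (j+1) with h | h
  · have e1 : Cc (j+1) k₁ k₂ = Dc k₁ k₂ (j+1-k₁-k₂) := if_pos h
    rw [e1, Dpascal k₁ k₂ (j+1-k₁-k₂) (by omega)]
    congr 1
    · congr 1
      · split_ifs with h1
        · rfl
        · rw [Cc, if_pos (by omega : k₁-1+k₂ ≤ j)]
          congr 1
          omega
      · split_ifs with h1
        · rfl
        · rw [Cc, if_pos (by omega : k₁+(k₂-1) ≤ j)]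
          congr 1
          omega
    · rcases le_or_gt (k₁+k₂) j with h2 | h2
      · rw [if_neg (by omega), Cc, if_pos h2]
        congr 1
        omega
      · rw [if_pos (by omega), Czero h2]
  · rw [Czero (show j+1 < k₁+k₂ by omega), Czero (show j < k₁+k₂ by omega), sub_zero]
    split_ifs with h1 h2 h3
    · simp
    · rw [Czero (show j < k₁ + (k₂-1) by omega)]; simp
    · rw [Czero (show j < (k₁-1) + k₂ by omega)]; simp
    · rw [Czero (show j < (k₁-1) + k₂ by omega), Czero (show j < k₁ + (k₂-1) by omega)]; simp

/-! ### Analysis lemmas -/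

lemma gamSmooth {t : ℝ} {v : ℝ → ℂ} (hv : ContDiff ℝ (⊤ : ℕ∞) v) : ContDiff ℝ (⊤ : ℕ∞) (Gam t v) := by
  have hv' : ContDiff ℝ (((⊤ : ℕ∞) : WithTop ℕ∞) + 1) v := by
    rw [show (((⊤ : ℕ∞) : WithTop ℕ∞) + 1 : WithTop ℕ∞) = ((⊤ : ℕ∞) : WithTop ℕ∞) from rfl]; exact hv
  have hd : ContDiff ℝ (⊤ : ℕ∞) (deriv v) := (contDiff_succ_iff_deriv.mp hv').2.2
  exact (Complex.ofRealCLM.contDiff.mul hv).add (contDiff_const.mul hd)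

lemma iterSmooth {t : ℝ} {u : ℝ → ℂ} (hu : ContDiff ℝ (⊤ : ℕ∞) u) (k : ℕ) :
    ContDiff ℝ (⊤ : ℕ∞) ((Gam t)^[k] u) := by
  induction k with
  | zero => simpa using hu
  | succ k ih => rw [Function.iterate_succ_apply']; exact gamSmooth ih

lemma gam_mul3 {t : ℝ} {v w z : ℝ → ℂ} {x : ℝ} (hv : DifferentiableAt ℝ v x)
    (hw : DifferentiableAt ℝ w x) (hz : DifferentiableAt ℝ z x) :
    Gam t (fun y => v y * w y * (starRingEnd ℂ) (z y)) x =
      Gam t v x * w x * (starRingEnd ℂ) (z x) + v x * Gam t w x * (starRingEnd ℂ) (z x)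
        - v x * w x * (starRingEnd ℂ) (Gam t z x) := by
  have hz' : HasDerivAt (fun y => (starRingEnd ℂ) (z y)) ((starRingEnd ℂ) (deriv z x)) x := by
    have := hz.hasDerivAt.star
    simp only [RCLike.star_def] at this
    exact this
  have H : HasDerivAt (fun y => v y * w y * (starRingEnd ℂ) (z y))
      ((deriv v x * w x + v x * deriv w x) * (starRingEnd ℂ) (z x)
        + v x * w x * (starRingEnd ℂ) (deriv z x)) x :=
    (hv.hasDerivAt.mul hw.hasDerivAt).mul hz'
  simp only [Gam, H.deriv, map_add, map_mul, Complex.conj_ofReal, Complex.conj_I,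
    map_ofNat]
  ring

lemma gam_sum {t : ℝ} {ι : Type*} (s : Finset ι) (f : ι → ℝ → ℂ) (x : ℝ)
    (hf : ∀ i ∈ s, DifferentiableAt ℝ (f i) x) :
    Gam t (fun y => ∑ i ∈ s, f i y) x = ∑ i ∈ s, Gam t (f i) x := by
  simp only [Gam]
  rw [deriv_fun_sum hf, Finset.mul_sum, Finset.mul_sum, ← Finset.sum_add_distrib]

lemma gam_const_mul {t : ℝ} {f : ℝ → ℂ} {x : ℝ} (c : ℂ) (hf : DifferentiableAt ℝ f x) :
    Gam t (fun y => c * f y) x = c * Gam t f x := by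
  simp only [Gam]
  rw [deriv_const_mul c hf]
  ring

lemma iter_diff {t : ℝ} {u : ℝ → ℂ} (hu : ContDiff ℝ (⊤ : ℕ∞) u) (k : ℕ) (x : ℝ) :
    DifferentiableAt ℝ ((Gam t)^[k] u) x :=
  ((iterSmooth hu k).differentiable (by simp)).differentiableAt

lemma term_diff {t : ℝ} {u : ℝ → ℂ} (hu : ContDiff ℝ (⊤ : ℕ∞) u) (a b c : ℕ) (x : ℝ) :
    DifferentiableAt ℝ
      (fun y => (Gam t)^[a] u y * (Gam t)^[b] u y * (starRingEnd ℂ) ((Gam t)^[c] u y)) x := by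
  exact ((iter_diff hu a x).mul (iter_diff hu b x)).mul ((iter_diff hu c x).star)

lemma key {t : ℝ} {u : ℝ → ℂ} (hu : ContDiff ℝ (⊤ : ℕ∞) u) (j : ℕ) (x : ℝ) :
    (Gam t)^[j] (fun y => u y * u y * (starRingEnd ℂ) (u y)) x =
      ∑ k₁ ∈ Finset.range (j+1), ∑ k₂ ∈ Finset.range (j+1),
        Cc j k₁ k₂ * ((Gam t)^[k₁] u x * (Gam t)^[k₂] u x *
          (starRingEnd ℂ) ((Gam t)^[j-k₁-k₂] u x)) := by
  induction j generalizing x with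
  | zero =>
    simp [Cc, Dc]
  | succ j ih =>
    set g : ℕ → ℝ → ℂ := fun k => (Gam t)^[k] u with hg
    have hgs : ∀ k, Gam t (g k) = g (k+1) := fun k =>
      (Function.iterate_succ_apply' (Gam t) k u).symm
    -- rewrite the iterate
    rw [Function.iterate_succ_apply']
    have hfun : (Gam t)^[j] (fun y => u y * u y * (starRingEnd ℂ) (u y)) =
        fun y => ∑ k₁ ∈ Finset.range (j+1), ∑ k₂ ∈ Finset.range (j+1),
          Cc j k₁ k₂ * (g k₁ y * g k₂ y * (starRingEnd ℂ) (g (j-k₁-k₂) y)) := funext ih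
    rw [hfun]
    -- push Gam through the sums
    have hdiff : ∀ a b c : ℕ, ∀ y : ℝ, DifferentiableAt ℝ
        (fun z => g a z * g b z * (starRingEnd ℂ) (g c z)) y := fun a b c y => term_diff hu a b c y
    rw [gam_sum (t := t) _ _ x (fun k₁ _ => by
      exact DifferentiableAt.fun_sum (fun k₂ _ => ((hdiff k₁ k₂ (j-k₁-k₂) x).const_mul _)))]
    have step1 : ∀ k₁ ∈ Finset.range (j+1),
        Gam t (fun y => ∑ k₂ ∈ Finset.range (j+1),
            Cc j k₁ k₂ * (g k₁ y * g k₂ y * (starRingEnd ℂ) (g (j-k₁-k₂) y))) x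
          = ∑ k₂ ∈ Finset.range (j+1), Cc j k₁ k₂ *
              (g (k₁+1) x * g k₂ x * (starRingEnd ℂ) (g (j-k₁-k₂) x)
               + g k₁ x * g (k₂+1) x * (starRingEnd ℂ) (g (j-k₁-k₂) x)
               - g k₁ x * g k₂ x * (starRingEnd ℂ) (g (j-k₁-k₂+1) x)) := by
      intro k₁ _
      rw [gam_sum (t := t) _ _ x (fun k₂ _ => (hdiff k₁ k₂ (j-k₁-k₂) x).const_mul _)]
      refine Finset.sum_congr rfl (fun k₂ _ => ?_)
      rw [gam_const_mul _ (hdiff k₁ k₂ (j-k₁-k₂) x)]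
      congr 1
      rw [gam_mul3 (iter_diff hu k₁ x) (iter_diff hu k₂ x) (iter_diff hu (j-k₁-k₂) x)]
      rw [hgs k₁, hgs k₂, hgs (j-k₁-k₂)]
    rw [Finset.sum_congr rfl step1]
    -- now pure combinatorics
    -- RHS transformation
    have rhs_eq : ∑ k₁ ∈ Finset.range (j+2), ∑ k₂ ∈ Finset.range (j+2),
        Cc (j+1) k₁ k₂ * (g k₁ x * g k₂ x * (starRingEnd ℂ) (g (j+1-k₁-k₂) x))
      = (∑ k₁ ∈ Finset.range (j+2), ∑ k₂ ∈ Finset.range (j+2),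
          (if k₁ = 0 then 0 else Cc j (k₁-1) k₂) *
            (g k₁ x * g k₂ x * (starRingEnd ℂ) (g (j+1-k₁-k₂) x)))
        + (∑ k₁ ∈ Finset.range (j+2), ∑ k₂ ∈ Finset.range (j+2),
          (if k₂ = 0 then 0 else Cc j k₁ (k₂-1)) *
            (g k₁ x * g k₂ x * (starRingEnd ℂ) (g (j+1-k₁-k₂) x)))
        - (∑ k₁ ∈ Finset.range (j+2), ∑ k₂ ∈ Finset.range (j+2),
          Cc j k₁ k₂ * (g k₁ x * g k₂ x * (starRingEnd ℂ) (g (j+1-k₁-k₂) x))) := by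
      rw [← Finset.sum_add_distrib, ← Finset.sum_sub_distrib]
      refine Finset.sum_congr rfl (fun k₁ _ => ?_)
      rw [← Finset.sum_add_distrib, ← Finset.sum_sub_distrib]
      refine Finset.sum_congr rfl (fun k₂ _ => ?_)
      rw [Crec]
      ring
    -- S1
    have S1 : ∑ k₁ ∈ Finset.range (j+2), ∑ k₂ ∈ Finset.range (j+2),
          (if k₁ = 0 then 0 else Cc j (k₁-1) k₂) *
            (g k₁ x * g k₂ x * (starRingEnd ℂ) (g (j+1-k₁-k₂) x))
        = ∑ k₁ ∈ Finset.range (j+1), ∑ k₂ ∈ Finset.range (j+1),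
            Cc j k₁ k₂ * (g (k₁+1) x * g k₂ x * (starRingEnd ℂ) (g (j-k₁-k₂) x)) := by
      rw [Finset.sum_range_succ']
      have h0 : ∑ k₂ ∈ Finset.range (j+2),
          (if (0:ℕ) = 0 then 0 else Cc j (0-1) k₂) *
            (g 0 x * g k₂ x * (starRingEnd ℂ) (g (j+1-0-k₂) x)) = 0 :=
        Finset.sum_eq_zero (fun k₂ _ => by rw [if_pos rfl, zero_mul])
      rw [h0, add_zero]
      refine Finset.sum_congr rfl (fun k₁ _ => ?_)
      simp only [Nat.succ_ne_zero, if_false, Nat.add_sub_cancel]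
      rw [Finset.sum_range_succ, Czero (show j < k₁ + (j+1) by omega), zero_mul, add_zero]
      refine Finset.sum_congr rfl (fun k₂ _ => ?_)
      have e : j + 1 - (k₁+1) - k₂ = j - k₁ - k₂ := by omega
      rw [e]
    -- S2
    have S2 : ∑ k₁ ∈ Finset.range (j+2), ∑ k₂ ∈ Finset.range (j+2),
          (if k₂ = 0 then 0 else Cc j k₁ (k₂-1)) *
            (g k₁ x * g k₂ x * (starRingEnd ℂ) (g (j+1-k₁-k₂) x))
        = ∑ k₁ ∈ Finset.range (j+1), ∑ k₂ ∈ Finset.range (j+1),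
            Cc j k₁ k₂ * (g k₁ x * g (k₂+1) x * (starRingEnd ℂ) (g (j-k₁-k₂) x)) := by
      rw [Finset.sum_range_succ]
      have hrow : ∑ k₂ ∈ Finset.range (j+2),
          (if k₂ = 0 then 0 else Cc j (j+1) (k₂-1)) *
            (g (j+1) x * g k₂ x * (starRingEnd ℂ) (g (j+1-(j+1)-k₂) x)) = 0 := by
        refine Finset.sum_eq_zero (fun k₂ _ => ?_)
        split_ifs with h1
        · rw [zero_mul]
        · rw [Czero (show j < (j+1) + (k₂-1) by omega), zero_mul]
      rw [hrow, add_zero]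
      refine Finset.sum_congr rfl (fun k₁ hk₁ => ?_)
      simp only [Finset.mem_range] at hk₁
      rw [Finset.sum_range_succ']
      have h0 : (if (0:ℕ) = 0 then 0 else Cc j k₁ (0-1)) *
          (g k₁ x * g 0 x * (starRingEnd ℂ) (g (j+1-k₁-0) x)) = 0 := by
        rw [if_pos rfl, zero_mul]
      rw [h0, add_zero]
      refine Finset.sum_congr rfl (fun k₂ _ => ?_)
      simp only [Nat.succ_ne_zero, if_false, Nat.add_sub_cancel]
      have e : j + 1 - k₁ - (k₂+1) = j - k₁ - k₂ := by omega
      rw [e]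
    -- S3
    have S3 : ∑ k₁ ∈ Finset.range (j+2), ∑ k₂ ∈ Finset.range (j+2),
          Cc j k₁ k₂ * (g k₁ x * g k₂ x * (starRingEnd ℂ) (g (j+1-k₁-k₂) x))
        = ∑ k₁ ∈ Finset.range (j+1), ∑ k₂ ∈ Finset.range (j+1),
            Cc j k₁ k₂ * (g k₁ x * g k₂ x * (starRingEnd ℂ) (g (j-k₁-k₂+1) x)) := by
      rw [Finset.sum_range_succ]
      have hrow : ∑ k₂ ∈ Finset.range (j+2),
          Cc j (j+1) k₂ * (g (j+1) x * g k₂ x * (starRingEnd ℂ) (g (j+1-(j+1)-k₂) x)) = 0 :=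
        Finset.sum_eq_zero (fun k₂ _ => by
          rw [Czero (show j < (j+1) + k₂ by omega), zero_mul])
      rw [hrow, add_zero]
      refine Finset.sum_congr rfl (fun k₁ hk₁ => ?_)
      rw [Finset.sum_range_succ, Czero (show j < k₁ + (j+1) by omega), zero_mul, add_zero]
      refine Finset.sum_congr rfl (fun k₂ _ => ?_)
      rcases le_or_gt (k₁ + k₂) j with h2 | h2
      · have e : j + 1 - k₁ - k₂ = j - k₁ - k₂ + 1 := by omega
        rw [e]
      · rw [Czero h2, zero_mul, zero_mul]
    rw [rhs_eq, S1, S2, S3, ← Finset.sum_add_distrib, ← Finset.sum_sub_distrib]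
    refine Finset.sum_congr rfl (fun k₁ _ => ?_)
    rw [← Finset.sum_add_distrib, ← Finset.sum_sub_distrib]
    refine Finset.sum_congr rfl (fun k₂ _ => ?_)
    ring

end Stmt17Aux

open Stmt17Aux in
theorem stmt17 (t : ℝ) (u : ℝ → ℂ) (hu : ContDiff ℝ (⊤ : ℕ∞) u) (j : ℕ) (x : ℝ) :
    (Gam t)^[j] (fun y => u y * u y * (starRingEnd ℂ) (u y)) x =
      ∑ k₁ ∈ Finset.range (j+1), ∑ k₂ ∈ Finset.range (j+1-k₁),
        ((j.factorial : ℂ) * (-1)^(j-k₁-k₂) /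
          ((k₁.factorial : ℂ) * (k₂.factorial : ℂ) * ((j-k₁-k₂).factorial : ℂ))) *
        ((Gam t)^[k₁] u x * (Gam t)^[k₂] u x *
          (starRingEnd ℂ) ((Gam t)^[j-k₁-k₂] u x)) := by
  rw [key hu j x]
  refine Finset.sum_congr rfl (fun k₁ hk₁ => ?_)
  simp only [Finset.mem_range] at hk₁
  rw [← Finset.sum_subset (Finset.range_subset_range.mpr (show j+1-k₁ ≤ j+1 by omega))
    (fun k₂ _ hk₂ => by
      rw [Czero (show j < k₁ + k₂ by simp only [Finset.mem_range] at hk₂ ⊢; omega), zero_mul])]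
  refine Finset.sum_congr rfl (fun k₂ hk₂ => ?_)
  simp only [Finset.mem_range] at hk₂
  have hle : k₁ + k₂ ≤ j := by omega
  have e : k₁ + k₂ + (j - k₁ - k₂) = j := by omega
  rw [Cc, if_pos hle, Dc, e]
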